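/- arXiv:1312.4463 — 5 statements merged into one kernel-verified Lean document; each statement's English description precedes it below -/
import Mathlib

section
/- For every real x with −1 ≤ x ≤ 0 and complex ν with 1 ≤ Re(ν) ≤ 2, one has |(1+x)^ν − 1 − νx| ≤ (1/2 + (1/Re(ν) − 1/2)·(−x))·|ν(ν−1)|·x². -/
/-!
Taylor's formula with integral remainder gives
`(1+x)^ν - 1 - νx = ν(ν-1)x² ∫₀¹ (1-t)(1+tx)^(ν-2) dt`. Since `p = Re ν - 2 ≤ 0`, the map
`s ↦ s^p` is convex on `(0, ∞)`, and writing `1 + tx = (1+x)·1 + (-x)·(1-t)` as a convex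
combination bounds `|(1+tx)^(ν-2)|` by `(1+x) + (-x)(1-t)^p`. Integrating against `1 - t` gives
`(1+x)/2 + (-x)/Re ν`, which is the claimed factor. At `x = -1` the claim reduces to `Re ν ≤ |ν|`.
-/

open Set Real MeasureTheory intervalIntegral

theorem convexOn_rpow_of_nonpos {p : ℝ} (hp : p ≤ 0) : ConvexOn ℝ (Ioi 0) fun x : ℝ ↦ x ^ p := by
  refine ⟨convex_Ioi 0, fun u (hu : 0 < u) v (hv : 0 < v) a b ha hb hab ↦ ?_⟩
  simp only [smul_eq_mul]
  calc (a * u + b * v) ^ p ≤ (u ^ a * v ^ b) ^ p :=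
        rpow_le_rpow_of_nonpos (by positivity)
          (geom_mean_le_arith_mean2_weighted ha hb hu.le hv.le hab) hp
    _ = (u ^ p) ^ a * (v ^ p) ^ b := by
        rw [mul_rpow (by positivity) (by positivity), ← rpow_mul hu.le, ← rpow_mul hv.le,
          ← rpow_mul hu.le, ← rpow_mul hv.le, mul_comm a, mul_comm b]
    _ ≤ a * u ^ p + b * v ^ p :=
        geom_mean_le_arith_mean2_weighted ha hb (by positivity) (by positivity) hab

theorem rpow_one_add_mul_le {x t p : ℝ} (hx1 : -1 ≤ x) (hx0 : x ≤ 0) (ht : t < 1) (hp : p ≤ 0) :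
    (1 + t * x) ^ p ≤ (1 + x) + -x * (1 - t) ^ p := by
  have h := (convexOn_rpow_of_nonpos hp).2 (mem_Ioi.2 one_pos) (mem_Ioi.2 (sub_pos.2 ht))
    (neg_le_iff_add_nonneg'.1 hx1) (neg_nonneg.2 hx0) (by ring)
  simp only [smul_eq_mul, one_rpow, mul_one] at h
  rwa [show 1 + x + -x * (1 - t) = 1 + t * x by ring] at h

theorem hasDerivAt_one_add_ofReal_mul_cpow {x t : ℝ} (h : 0 < 1 + t * x) (c : ℂ) :
    HasDerivAt (fun s : ℝ ↦ (1 + s * x : ℂ) ^ c) (c * (1 + t * x) ^ (c - 1) * x) t := by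
  have hslit : (1 + t * x : ℂ) ∈ Complex.slitPlane := by
    exact_mod_cast Complex.ofReal_mem_slitPlane.2 h
  simpa using
    ((((hasDerivAt_id (t : ℂ)).mul_const (x : ℂ)).const_add 1).cpow_const hslit).comp_ofReal

theorem one_add_cpow_sub_one_sub_mul_eq_integral {x : ℝ} (hx : -1 < x) (ν : ℂ) :
    (1 + (x : ℂ)) ^ ν - 1 - ν * x =
      ∫ t in (0 : ℝ)..1, (1 - t) * (ν * (ν - 1) * x ^ 2 * (1 + t * x) ^ (ν - 2)) := by
  have hpos : ∀ t ∈ uIcc (0 : ℝ) 1, 0 < 1 + t * x := by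
    intro t ht
    rw [uIcc_of_le zero_le_one] at ht
    rcases ht.1.eq_or_lt with rfl | ht0
    · simp
    · nlinarith [mul_pos ht0 (show 0 < 1 + x by linarith), ht.2]
  let F : ℝ → ℂ := fun t ↦ (1 + t * x : ℂ) ^ ν + (1 - t) * (ν * x) * (1 + t * x : ℂ) ^ (ν - 1)
  have hF : ∀ t ∈ uIcc (0 : ℝ) 1,
      HasDerivAt F ((1 - t) * (ν * (ν - 1) * x ^ 2 * (1 + t * x) ^ (ν - 2))) t := by
    intro t ht
    have h1 := hasDerivAt_one_add_ofReal_mul_cpow (hpos t ht) ν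
    have h2 := hasDerivAt_one_add_ofReal_mul_cpow (hpos t ht) (ν - 1)
    have h3 : HasDerivAt (fun s : ℝ ↦ (1 - s : ℂ) * (ν * x)) (-(ν * x)) t := by
      simpa using (((hasDerivAt_id (t : ℂ)).const_sub 1).comp_ofReal).mul_const (ν * x)
    refine (h1.add (h3.mul h2)).congr_deriv ?_
    rw [show ν - 1 - 1 = ν - 2 by ring]
    ring
  have hint : IntervalIntegrable
      (fun t : ℝ ↦ (1 - t) * (ν * (ν - 1) * x ^ 2 * (1 + t * x : ℂ) ^ (ν - 2))) volume 0 1 := by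
    refine ContinuousOn.intervalIntegrable fun t ht ↦ ContinuousAt.continuousWithinAt ?_
    have := (hasDerivAt_one_add_ofReal_mul_cpow (hpos t ht) (ν - 2)).continuousAt
    fun_prop
  rw [integral_eq_sub_of_hasDerivAt hF hint]
  simp [F]
  ring

theorem integral_one_sub_rpow {r : ℝ} (hr : -1 < r) :
    ∫ t in (0 : ℝ)..1, (1 - t) ^ r = 1 / (r + 1) := by
  rw [integral_comp_sub_left (fun t ↦ t ^ r), sub_self, sub_zero, integral_rpow (Or.inl hr),
    zero_rpow (by linarith), one_rpow]
  ring

theorem norm_taylor_integrand_le {x t : ℝ} (hx1 : -1 ≤ x) (hx0 : x ≤ 0) (ht1 : t ≤ 1)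
    {ν : ℂ} (hν : ν.re ≤ 2) :
    ‖(1 - t : ℂ) * (ν * (ν - 1) * x ^ 2 * (1 + t * x : ℂ) ^ (ν - 2))‖ ≤
      ‖ν * (ν - 1)‖ * x ^ 2 * ((1 + x) * (1 - t) + -x * (1 - t) ^ (ν.re - 1)) := by
  rcases ht1.eq_or_lt with rfl | ht1
  · simp only [Complex.ofReal_one, sub_self, zero_mul, norm_zero, mul_zero, zero_add]
    have := mul_nonneg (neg_nonneg.2 hx0) (zero_rpow_nonneg (ν.re - 1))
    positivity
  have hpos : 0 < 1 + t * x := by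
    rcases le_or_gt t 0 with ht0 | ht0 <;> nlinarith
  have hnorm : ‖(1 - t : ℂ) * (ν * (ν - 1) * x ^ 2 * (1 + t * x : ℂ) ^ (ν - 2))‖ =
      (1 - t) * ‖ν * (ν - 1)‖ * x ^ 2 * (1 + t * x) ^ (ν.re - 2) := by
    have h1 : (1 - t : ℂ) = ((1 - t : ℝ) : ℂ) := by push_cast; ring
    have h2 : (1 + t * x : ℂ) = ((1 + t * x : ℝ) : ℂ) := by push_cast; ring
    rw [h1, h2, norm_mul, norm_mul, norm_mul, Complex.norm_real, norm_pow, Complex.norm_real,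
      Complex.norm_cpow_eq_rpow_re_of_pos hpos, Real.norm_of_nonneg (by linarith),
      Real.norm_eq_abs, sq_abs, Complex.sub_re, Complex.re_ofNat]
    ring
  calc _ = (1 - t) * ‖ν * (ν - 1)‖ * x ^ 2 * (1 + t * x) ^ (ν.re - 2) := hnorm
    _ ≤ (1 - t) * ‖ν * (ν - 1)‖ * x ^ 2 * ((1 + x) + -x * (1 - t) ^ (ν.re - 2)) :=
        mul_le_mul_of_nonneg_left (rpow_one_add_mul_le hx1 hx0 ht1 (by linarith))
          (mul_nonneg (mul_nonneg (by linarith) (norm_nonneg _)) (sq_nonneg x))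
    _ = _ := by
        rw [show ν.re - 1 = ν.re - 2 + 1 by ring, rpow_add_one (by linarith)]
        ring

theorem norm_taylor_integral_le {x : ℝ} (hx1 : -1 ≤ x) (hx0 : x ≤ 0) {ν : ℂ} (hν1 : 0 < ν.re)
    (hν2 : ν.re ≤ 2) :
    ‖∫ t in (0 : ℝ)..1, (1 - t : ℂ) * (ν * (ν - 1) * x ^ 2 * (1 + t * x : ℂ) ^ (ν - 2))‖ ≤
      ((1 + x) / 2 + -x / ν.re) * ‖ν * (ν - 1)‖ * x ^ 2 := by
  have i1 : IntervalIntegrable (fun t : ℝ ↦ 1 - t) volume 0 1 :=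
    (continuous_const.sub continuous_id).intervalIntegrable 0 1
  have i2 : IntervalIntegrable (fun t : ℝ ↦ (1 - t) ^ (ν.re - 1)) volume 0 1 := by
    simpa using ((intervalIntegrable_rpow' (a := 0) (b := 1) (r := ν.re - 1)
      (by linarith)).comp_sub_left 1).symm
  have h1 : ∫ t in (0 : ℝ)..1, (1 - t) = 1 / 2 := by
    simpa [one_add_one_eq_two] using integral_one_sub_rpow (r := 1) (by norm_num)
  calc _ ≤ ∫ t in (0 : ℝ)..1,
        ‖ν * (ν - 1)‖ * x ^ 2 * ((1 + x) * (1 - t) + -x * (1 - t) ^ (ν.re - 1)) :=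
        norm_integral_le_of_norm_le zero_le_one
          (ae_of_all _ fun t ht ↦ norm_taylor_integrand_le hx1 hx0 ht.2 hν2)
          (((i1.const_mul _).add (i2.const_mul _)).const_mul _)
    _ = _ := by
        rw [intervalIntegral.integral_const_mul, integral_add (i1.const_mul _) (i2.const_mul _),
          intervalIntegral.integral_const_mul, intervalIntegral.integral_const_mul, h1,
          integral_one_sub_rpow (by linarith), sub_add_cancel]
        ring

theorem norm_sub_one_le_norm_mul_div_re {ν : ℂ} (hν : 0 < ν.re) :
    ‖ν - 1‖ ≤ ‖ν * (ν - 1)‖ / ν.re := by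
  rw [le_div_iff₀ hν, norm_mul, mul_comm ‖ν‖]
  exact mul_le_mul_of_nonneg_left (Complex.re_le_norm ν) (norm_nonneg _)

/-- Optimized Littlewood lemma: for `−1 ≤ x ≤ 0` and complex `ν` with `1 ≤ Re ν ≤ 2`,
`|(1+x)^ν − 1 − νx| ≤ (1/2 + (1/Re ν − 1/2)(−x))·|ν(ν−1)|·x²`. -/
theorem littlewood_optimized (x : ℝ) (hx1 : -1 ≤ x) (hx0 : x ≤ 0) (ν : ℂ)
    (hν1 : 1 ≤ ν.re) (hν2 : ν.re ≤ 2) :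
    ‖(1 + (x : ℂ)) ^ ν - 1 - ν * (x : ℂ)‖ ≤
      (1 / 2 + (1 / ν.re - 1 / 2) * (-x)) * ‖ν * (ν - 1)‖ * x ^ 2 := by
  have hσ : 0 < ν.re := by linarith
  rw [show 1 / 2 + (1 / ν.re - 1 / 2) * -x = (1 + x) / 2 + -x / ν.re by ring]
  rcases hx1.eq_or_lt with rfl | hx
  · have hν : ν ≠ 0 := by rintro rfl; simp at hσ
    simpa [Complex.zero_cpow hν, div_eq_inv_mul, neg_add_eq_sub] using
      norm_sub_one_le_norm_mul_div_re hσ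
  · rw [one_add_cpow_sub_one_sub_mul_eq_integral hx]
    exact norm_taylor_integral_le hx1 hx0 hσ hν2
end

section
/- Define f₁(x) = ∑_{r=1}^∞ x^{1−2r}/(2r(2r−1)) for x > 1. Then f₁(x) = (1/2)[x·log(1 − x^{−2}) + log((1 + x^{−1})/(1 − x^{−1}))]. -/
open Real

/-! With `y = x⁻¹` the `r`-th term is `x · y^(2r+2)/((2r+1)(2r+2))`, and the partial fraction
`1/((2r+1)(2r+2)) = 1/(2r+1) - 1/(2r+2)` splits the series into the odd part of the logarithmic
series, `∑ y^(2r+1)/(2r+1) = (1/2) log((1+y)/(1-y))`, and its even part,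
`∑ y^(2r+2)/(2r+2) = -(1/2) log(1-y²)`. -/

theorem Real.hasSum_pow_two_mul_add_two_div_mul {y : ℝ} (hy : |y| < 1) :
    HasSum (fun r : ℕ => y ^ (2 * r + 2) / ((2 * r + 1) * (2 * r + 2)))
      ((y * log ((1 + y) / (1 - y)) + log (1 - y ^ 2)) / 2) := by
  obtain ⟨hy₁, hy₂⟩ := abs_lt.1 hy
  have hodd := (hasSum_log_sub_log_of_abs_lt_one hy).mul_left (y / 2)
  have heven := (hasSum_pow_div_log_of_abs_lt_one (x := y ^ 2) (by
    rw [abs_pow, sq_lt_one_iff₀ (abs_nonneg y)]; exact hy)).mul_left (1 / 2)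
  have hterm : (fun r : ℕ => y ^ (2 * r + 2) / ((2 * r + 1) * (2 * r + 2))) =
      fun r : ℕ => y / 2 * (2 * (1 / (2 * r + 1)) * y ^ (2 * r + 1)) -
        1 / 2 * ((y ^ 2) ^ (r + 1) / (r + 1)) := by
    funext r
    have h₁ : (2 * r + 1 : ℝ) ≠ 0 := by positivity
    have h₂ : (r + 1 : ℝ) ≠ 0 := by positivity
    field_simp
    ring
  have hsum : (y * log ((1 + y) / (1 - y)) + log (1 - y ^ 2)) / 2 =
      y / 2 * (log (1 + y) - log (1 - y)) - 1 / 2 * -log (1 - y ^ 2) := by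
    rw [log_div (by linarith) (by linarith)]
    ring
  rw [hterm, hsum]
  exact hodd.sub heven

/-- For `x > 1`,
`f₁(x) = ∑_{r=1}^∞ x^{1−2r}/(2r(2r−1))
       = (1/2)[x·log(1 − x⁻²) + log((1 + x⁻¹)/(1 − x⁻¹))]`. -/
theorem f1_closed_form (x : ℝ) (hx : 1 < x) :
    ∑' r : ℕ, x ^ (1 - 2 * ((r : ℤ) + 1)) / ((2 * ((r : ℝ) + 1)) * (2 * ((r : ℝ) + 1) - 1)) =
      1 / 2 * (x * Real.log (1 - (x⁻¹) ^ 2) + Real.log ((1 + x⁻¹) / (1 - x⁻¹))) := by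
  have hx₀ : x ≠ 0 := by positivity
  have hy : |x⁻¹| < 1 := by
    rw [abs_inv, abs_of_pos (by positivity)]; exact inv_lt_one_of_one_lt₀ hx
  convert ((hasSum_pow_two_mul_add_two_div_mul hy).mul_left x).tsum_eq using 1
  · congr 1
    funext r
    have hexp : (1 - 2 * ((r : ℤ) + 1)) = -((2 * r + 1 : ℕ) : ℤ) := by push_cast; ring
    rw [hexp, zpow_neg, zpow_natCast, pow_succ x⁻¹ (2 * r + 1), inv_pow,
      show (2 * ((r : ℝ) + 1) - 1) = 2 * r + 1 by ring]
    field_simp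
  · field_simp
    ring
end

section
/- Define f₂(x) = ∑_{r=2}^∞ x^{2−2r}/((2r−1)(2r−2)) for x > 1. Then f₂(x) = 1 − (1/2)[log(1 − x^{−2}) + x·log((1 + x^{−1})/(1 − x^{−1}))]. -/
/-!
With `y = x⁻¹`, partial fractions split the `r`-th term as
`y^(2r-2)/(2r-2) - y⁻¹ · y^(2r-1)/(2r-1)`: the even part of the series of `-log (1 - y)`
minus `y⁻¹` times the odd part (without its first term) of the series of `log (1 + y)`.
-/

open Real

namespace Real

theorem hasSum_pow_two_mul_add_two_div {y : ℝ} (hy : |y| < 1) :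
    HasSum (fun n : ℕ => y ^ (2 * n + 2) / (2 * n + 2)) (-(1 / 2) * log (1 - y ^ 2)) := by
  have hy2 : |y ^ 2| < 1 := by
    rw [abs_pow, sq_lt_one_iff₀ (abs_nonneg y)]
    exact hy
  rw [neg_mul_comm]
  refine ((hasSum_pow_div_log_of_abs_lt_one hy2).mul_left (1 / 2)).congr_fun fun n => ?_
  rw [← pow_mul]
  field_simp
  ring_nf

theorem hasSum_pow_two_mul_add_three_div {y : ℝ} (hy : |y| < 1) :
    HasSum (fun n : ℕ => y ^ (2 * n + 3) / (2 * n + 3))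
      (1 / 2 * log ((1 + y) / (1 - y)) - y) := by
  have hodd : HasSum (fun k : ℕ => y ^ (2 * k + 1) / (2 * k + 1))
      (1 / 2 * log ((1 + y) / (1 - y))) := by
    have h1y : 0 < 1 - y := by linarith [le_abs_self y]
    have h1y' : 0 < 1 + y := by linarith [neg_abs_le y]
    rw [log_div h1y'.ne' h1y.ne']
    refine ((hasSum_log_sub_log_of_abs_lt_one hy).mul_left (1 / 2)).congr_fun fun k => ?_
    field_simp
  have hshift := (hasSum_nat_add_iff' 1).mpr hodd
  norm_num at hshift
  refine hshift.congr_fun fun n => ?_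
  ring_nf

theorem hasSum_pow_div_mul_of_abs_lt_one {y : ℝ} (hy0 : y ≠ 0) (hy : |y| < 1) :
    HasSum (fun n : ℕ => y ^ (2 * n + 2) / ((2 * n + 2) * (2 * n + 3)))
      (1 - 1 / 2 * (log (1 - y ^ 2) + y⁻¹ * log ((1 + y) / (1 - y)))) := by
  have hsum := (hasSum_pow_two_mul_add_two_div hy).sub
    ((hasSum_pow_two_mul_add_three_div hy).mul_left y⁻¹)
  rw [show -(1 / 2) * log (1 - y ^ 2) - y⁻¹ * (1 / 2 * log ((1 + y) / (1 - y)) - y) =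
      1 - 1 / 2 * (log (1 - y ^ 2) + y⁻¹ * log ((1 + y) / (1 - y))) by field_simp; ring] at hsum
  refine hsum.congr_fun fun n => ?_
  field_simp
  ring

end Real

/-- For `x > 1`,
`f₂(x) = ∑_{r=2}^∞ x^{2−2r}/((2r−1)(2r−2))
       = 1 − (1/2)[log(1 − x⁻²) + x·log((1 + x⁻¹)/(1 − x⁻¹))]`. -/
theorem f2_closed_form (x : ℝ) (hx : 1 < x) :
    ∑' r : ℕ, x ^ (2 - 2 * ((r : ℤ) + 2)) /
        ((2 * ((r : ℝ) + 2) - 1) * (2 * ((r : ℝ) + 2) - 2)) =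
      1 - 1 / 2 * (Real.log (1 - (x⁻¹) ^ 2) + x * Real.log ((1 + x⁻¹) / (1 - x⁻¹))) := by
  have hx0 : 0 < x := one_pos.trans hx
  have hy : |x⁻¹| < 1 := by
    rw [abs_of_pos (inv_pos.mpr hx0)]
    exact inv_lt_one_of_one_lt₀ hx
  have hterm : ∀ r : ℕ, x ^ (2 - 2 * ((r : ℤ) + 2)) /
      ((2 * ((r : ℝ) + 2) - 1) * (2 * ((r : ℝ) + 2) - 2)) =
      x⁻¹ ^ (2 * r + 2) / ((2 * r + 2) * (2 * r + 3)) := by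
    intro r
    rw [show (2 - 2 * ((r : ℤ) + 2)) = -((2 * r + 2 : ℕ) : ℤ) by push_cast; ring,
      zpow_neg, zpow_natCast, inv_pow]
    ring
  simp_rw [hterm]
  simpa using (hasSum_pow_div_mul_of_abs_lt_one (inv_ne_zero hx0.ne') hy).tsum_eq
end

section
/- Let r₁, r₂ be nonnegative integers, and let R'(x) = −(r₁ + r₂ − 1)·log x − (r₁/2)·log(1 − x^{−2}) − r₂·log(1 − x^{−1}). Then for all x ≥ 3, −(r₁ + r₂ − 1)·log x ≤ R'(x), and moreover R'(x) ≤ 1.22/x if r₁ + r₂ ≤ 2 while R'(x) ≤ 0 if r₁ + r₂ ≥ 3 — in particular R'(x) ≤ 1.22·δ/x where δ = 1 if r₁ + 2r₂ ≤ 2 and δ = 0 otherwise. -/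
/-!
Both `log (1 - x⁻¹)` and `log (1 - x⁻²)` are nonpositive, which gives the lower bound.
For the upper bound, concavity of `log` bounds `-log (1 - t)` on `[0, 1/3]` by its secant
`3 log (3/2) · t ≤ 1.22 t`, and `log (1 - x⁻²) ≥ log (1 - x⁻¹)`; hence, with `s = r₁ + r₂`,
`R'(x) ≤ -(s - 1) log x + 1.22 s / x`. This is `1.22 / x` for `s = 1`, and is negative for
`s ≥ 2` because `log x ≥ log 3 > 1` while `1.22 s / x ≤ 0.41 s ≤ s - 1`.
-/

open Real

lemma neg_log_one_sub_le_secant {t a : ℝ} (ht : 0 ≤ t) (hta : t ≤ a) (ha : a < 1) :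
    -log (1 - t) ≤ t / a * -log (1 - a) := by
  rcases ht.eq_or_lt with rfl | ht
  · simp
  have ha0 : 0 < a := ht.trans_le hta
  have hθ : t / a ≤ 1 := (div_le_one ha0).2 hta
  have h := strictConcaveOn_log_Ioi.concaveOn.2 (x := 1) (y := 1 - a) (by simp)
    (by simpa using ha) (sub_nonneg.2 hθ) (div_nonneg ht.le ha0.le) (by ring)
  have hpt : (1 - t / a) * 1 + t / a * (1 - a) = 1 - t := by
    field_simp; ring
  simp only [smul_eq_mul, hpt, log_one, mul_zero, zero_add] at h
  linarith

lemma log_three_halves_lt : log (3 / 2) < 0.4055 := by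
  rw [log_div (by norm_num) (by norm_num)]
  linarith [log_three_lt_d9, log_two_gt_d9]

lemma neg_log_one_sub_le_of_le_third {t : ℝ} (h0 : 0 ≤ t) (h1 : t ≤ 1 / 3) :
    -log (1 - t) ≤ 1.22 * t := by
  have h := neg_log_one_sub_le_secant h0 h1 (by norm_num)
  have hc : -log (1 - 1 / 3 : ℝ) = log (3 / 2) := by
    rw [← log_inv]; norm_num
  rw [hc] at h
  nlinarith [log_three_halves_lt]

lemma log_one_sub_le_log_one_sub_sq {t : ℝ} (h0 : 0 ≤ t) (h1 : t < 1) :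
    log (1 - t) ≤ log (1 - t ^ 2) :=
  log_le_log (by linarith) (by nlinarith)

noncomputable def Rprime (r₁ r₂ x : ℝ) : ℝ :=
  -(r₁ + r₂ - 1) * log x - r₁ / 2 * log (1 - x⁻¹ ^ 2) - r₂ * log (1 - x⁻¹)

section Rprime

variable {r₁ r₂ x : ℝ}

lemma neg_mul_log_le_Rprime (hr₁ : 0 ≤ r₁) (hr₂ : 0 ≤ r₂) (hx : 1 ≤ x) :
    -(r₁ + r₂ - 1) * log x ≤ Rprime r₁ r₂ x := by
  have ht0 : 0 ≤ x⁻¹ := by positivity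
  have ht1 : x⁻¹ ≤ 1 := inv_le_one_of_one_le₀ hx
  have hl : log (1 - x⁻¹) ≤ 0 := log_nonpos (by linarith) (by linarith)
  have hl₂ : log (1 - x⁻¹ ^ 2) ≤ 0 := log_nonpos (by nlinarith) (by nlinarith)
  unfold Rprime
  nlinarith [mul_nonpos_of_nonneg_of_nonpos hr₁ hl₂, mul_nonpos_of_nonneg_of_nonpos hr₂ hl]

lemma Rprime_le (hr₁ : 0 ≤ r₁) (hr₂ : 0 ≤ r₂) (hx : 3 ≤ x) :
    Rprime r₁ r₂ x ≤ -(r₁ + r₂ - 1) * log x + 1.22 * (r₁ + r₂) / x := by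
  have hx0 : 0 < x := by linarith
  have ht0 : 0 ≤ x⁻¹ := by positivity
  have ht3 : x⁻¹ ≤ 1 / 3 := by rw [inv_le_comm₀ hx0 (by norm_num)]; linarith
  have hL : -log (1 - x⁻¹) ≤ 1.22 * x⁻¹ := neg_log_one_sub_le_of_le_third ht0 ht3
  have hL0 : 0 ≤ -log (1 - x⁻¹) := neg_nonneg.2 (log_nonpos (by linarith) (by linarith))
  have hML : -log (1 - x⁻¹ ^ 2) ≤ -log (1 - x⁻¹) :=
    neg_le_neg (log_one_sub_le_log_one_sub_sq ht0 (by linarith))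
  have hr₁L : r₁ / 2 * -log (1 - x⁻¹ ^ 2) ≤ r₁ * -log (1 - x⁻¹) := by
    nlinarith [mul_le_mul_of_nonneg_left hML hr₁, mul_nonneg hr₁ hL0]
  calc Rprime r₁ r₂ x
      = -(r₁ + r₂ - 1) * log x + r₁ / 2 * -log (1 - x⁻¹ ^ 2) + r₂ * -log (1 - x⁻¹) := by
        unfold Rprime; ring
    _ ≤ -(r₁ + r₂ - 1) * log x + (r₁ + r₂) * -log (1 - x⁻¹) := by linarith
    _ ≤ -(r₁ + r₂ - 1) * log x + (r₁ + r₂) * (1.22 * x⁻¹) := by gcongr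
    _ = -(r₁ + r₂ - 1) * log x + 1.22 * (r₁ + r₂) / x := by ring

end Rprime

/-- Derivative bound of Lemma 2.2: for `r₁` real and `r₂` complex places of a number field
(so `r₁ + r₂ ≥ 1`) and
`R'(x) = −(r₁+r₂−1)·log x − (r₁/2)·log(1 − x⁻²) − r₂·log(1 − x⁻¹)`,
for all `x ≥ 3` one has `−(r₁+r₂−1)·log x ≤ R'(x)`; moreover `R'(x) ≤ 1.22/x` if
`r₁ + r₂ ≤ 2`, `R'(x) ≤ 0` if `r₁ + r₂ ≥ 3`, and in particular `R'(x) ≤ 1.22·δ/x`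
where `δ = 1` if `r₁ + 2r₂ ≤ 2` and `δ = 0` otherwise. -/
theorem Rprime_bounds (r₁ r₂ : ℕ) (hK : 1 ≤ r₁ + r₂) (x : ℝ) (hx : 3 ≤ x)
    (R : ℝ)
    (hR : R = -((r₁ : ℝ) + (r₂ : ℝ) - 1) * Real.log x
        - (r₁ : ℝ) / 2 * Real.log (1 - (x⁻¹) ^ 2)
        - (r₂ : ℝ) * Real.log (1 - x⁻¹)) :
    -((r₁ : ℝ) + (r₂ : ℝ) - 1) * Real.log x ≤ R ∧
    (r₁ + r₂ ≤ 2 → R ≤ 1.22 / x) ∧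
    (3 ≤ r₁ + r₂ → R ≤ 0) ∧
    R ≤ 1.22 * (if r₁ + 2 * r₂ ≤ 2 then (1 : ℝ) else 0) / x := by
  change R = Rprime r₁ r₂ x at hR
  subst hR
  have hr₁ : (0 : ℝ) ≤ r₁ := r₁.cast_nonneg
  have hr₂ : (0 : ℝ) ≤ r₂ := r₂.cast_nonneg
  have hup := Rprime_le hr₁ hr₂ hx
  have hlog : 1 < log x := by
    linarith [log_three_gt_d9, log_le_log (by norm_num : (0 : ℝ) < 3) hx]
  have hone : r₁ + r₂ = 1 → Rprime r₁ r₂ x ≤ 1.22 / x := fun hs => by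
    have hs' : (r₁ : ℝ) + r₂ = 1 := by exact_mod_cast hs
    simpa [hs'] using hup
  have hneg : 2 ≤ r₁ + r₂ → Rprime r₁ r₂ x ≤ 0 := fun hs => by
    have hs' : (2 : ℝ) ≤ r₁ + r₂ := by exact_mod_cast hs
    have h3x : 1.22 * ((r₁ : ℝ) + r₂) / x ≤ 1.22 * ((r₁ : ℝ) + r₂) / 3 :=
      div_le_div_of_nonneg_left (by positivity) (by norm_num) hx
    nlinarith
  have hle : r₁ + r₂ ≤ 2 → Rprime r₁ r₂ x ≤ 1.22 / x := fun hs => by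
    rcases (by omega : r₁ + r₂ = 1 ∨ 2 ≤ r₁ + r₂) with h | h
    · exact hone h
    · exact (hneg h).trans (by positivity)
  refine ⟨neg_mul_log_le_Rprime hr₁ hr₂ (by linarith), hle, fun hs => hneg (by omega), ?_⟩
  split_ifs with hδ
  · simpa using hle (by omega)
  · simpa using hneg (by omega)
end

section
/- Let ρ = 1/2 + iγ with γ real (a zero on the critical line), x > 1, and h real with |h| < x, h ≠ 0. Define w_ρ = ((1 + h/x)^{ρ+1} − 1 − (ρ+1)·h/x)/(ρ(ρ+1)·(h/x)²). If h > 0 then |w_ρ| ≤ 1/2; if −x < h < 0 then |w_ρ| ≤ 1/2 + |h|/(6x). -/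
/-! With `ν = ρ + 1` and `σ = Re ν = 3/2`, the function `f δ = (1 + δ)^ν - 1 - ν δ` vanishes to
second order at `0`, and `‖f'' δ‖ = ‖ν (ν - 1)‖ (1 + δ)^(σ - 2)` is exactly
`‖ν (ν - 1)‖ / (σ (σ - 1))` times the second derivative of the real function
`g δ = (1 + δ)^σ - 1 - σ δ`. Integrating this comparison twice gives
`‖f δ‖ ≤ ‖ν (ν - 1)‖ g δ / (σ (σ - 1))`, so `‖w_ρ‖ ≤ (4/3) g δ / δ²` with `δ = h / x`. What is left
are the elementary bounds `(4/3) g δ ≤ δ²/2` for `δ ≥ 0` and `(4/3) g δ ≤ δ² (1/2 - δ/6)` for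
`-1 ≤ δ ≤ 0`, which become polynomial inequalities in `s = √(1 + δ)`. -/

open Set

section Majorant

variable {E : Type*} [NormedAddCommGroup E] [NormedSpace ℝ E]

theorem norm_le_of_norm_deriv_le_deriv {f f' : ℝ → E} {g g' : ℝ → ℝ} {a b : ℝ}
    (hf : ∀ x ∈ Icc a b, HasDerivAt f (f' x) x) (hg : ∀ x ∈ Icc a b, HasDerivAt g (g' x) x)
    (ha : ‖f a‖ ≤ g a) (bound : ∀ x ∈ Icc a b, ‖f' x‖ ≤ g' x) :
    ∀ x ∈ Icc a b, ‖f x‖ ≤ g x := fun _ hx =>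
  image_norm_le_of_norm_deriv_right_le_deriv_boundary'
    (fun x hx => (hf x hx).continuousAt.continuousWithinAt)
    (fun x hx => (hf x (Ico_subset_Icc_self hx)).hasDerivWithinAt) ha
    (fun x hx => (hg x hx).continuousAt.continuousWithinAt)
    (fun x hx => (hg x (Ico_subset_Icc_self hx)).hasDerivWithinAt)
    (fun x hx => bound x (Ico_subset_Icc_self hx)) hx

theorem norm_le_of_norm_deriv2_le_deriv2 {f f' f'' : ℝ → E} {g g' g'' : ℝ → ℝ} {a b : ℝ}
    (hf : ∀ x ∈ Icc a b, HasDerivAt f (f' x) x) (hf' : ∀ x ∈ Icc a b, HasDerivAt f' (f'' x) x)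
    (hg : ∀ x ∈ Icc a b, HasDerivAt g (g' x) x) (hg' : ∀ x ∈ Icc a b, HasDerivAt g' (g'' x) x)
    (ha : ‖f a‖ ≤ g a) (ha' : ‖f' a‖ ≤ g' a) (bound : ∀ x ∈ Icc a b, ‖f'' x‖ ≤ g'' x) :
    ∀ x ∈ Icc a b, ‖f x‖ ≤ g x :=
  norm_le_of_norm_deriv_le_deriv hf hg ha (norm_le_of_norm_deriv_le_deriv hf' hg' ha' bound)

theorem norm_le_of_norm_deriv2_le_deriv2_of_eq_zero {f f' f'' : ℝ → E} {g g' g'' : ℝ → ℝ}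
    {t : ℝ}
    (hf : ∀ x ∈ uIcc 0 t, HasDerivAt f (f' x) x) (hf' : ∀ x ∈ uIcc 0 t, HasDerivAt f' (f'' x) x)
    (hg : ∀ x ∈ uIcc 0 t, HasDerivAt g (g' x) x) (hg' : ∀ x ∈ uIcc 0 t, HasDerivAt g' (g'' x) x)
    (hf0 : f 0 = 0) (hf'0 : f' 0 = 0) (hg0 : g 0 = 0) (hg'0 : g' 0 = 0)
    (bound : ∀ x ∈ uIcc 0 t, ‖f'' x‖ ≤ g'' x) :
    ‖f t‖ ≤ g t := by
  rcases le_total 0 t with ht | ht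
  · rw [uIcc_of_le ht] at *
    exact norm_le_of_norm_deriv2_le_deriv2 hf hf' hg hg' (by simp [hf0, hg0])
      (by simp [hf'0, hg'0]) bound t ⟨ht, le_rfl⟩
  · rw [uIcc_of_ge ht] at *
    -- reflect through `0` and use the case `0 ≤ t`
    have hneg : ∀ x ∈ Icc 0 (-t), -x ∈ Icc t 0 := fun x hx =>
      ⟨by linarith [hx.2], by linarith [hx.1]⟩
    have := norm_le_of_norm_deriv2_le_deriv2 (a := 0) (b := -t) (f := fun x => f (-x))
      (f' := fun x => -f' (-x)) (f'' := fun x => f'' (-x)) (g := fun x => g (-x))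
      (g' := fun x => -g' (-x)) (g'' := fun x => g'' (-x))
      (fun x hx => ((hf _ (hneg x hx)).scomp x (hasDerivAt_neg x)).congr_deriv (by simp))
      (fun x hx => ((hf' _ (hneg x hx)).scomp x (hasDerivAt_neg x)).neg.congr_deriv (by simp))
      (fun x hx => ((hg _ (hneg x hx)).comp x (hasDerivAt_neg x)).congr_deriv (by simp))
      (fun x hx => ((hg' _ (hneg x hx)).comp x (hasDerivAt_neg x)).neg.congr_deriv (by simp))
      (by simp [hf0, hg0]) (by simp [hf'0, hg'0]) (fun x hx => bound _ (hneg x hx))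
      (-t) ⟨by linarith, le_rfl⟩
    simpa using this

end Majorant

theorem hasDerivAt_one_add_ofReal_cpow (ν : ℂ) {t : ℝ} (ht : 0 < 1 + t) :
    HasDerivAt (fun t : ℝ => ((1 + t : ℝ) : ℂ) ^ ν) (ν * ((1 + t : ℝ) : ℂ) ^ (ν - 1)) t := by
  have h := (((hasDerivAt_id (t : ℂ)).const_add 1).cpow_const (c := ν)
    (by simpa using Complex.ofReal_mem_slitPlane.2 ht)).comp_ofReal
  push_cast
  simpa using h

theorem hasDerivAt_one_add_rpow (σ : ℝ) {t : ℝ} (ht : 0 < 1 + t) :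
    HasDerivAt (fun t : ℝ => (1 + t) ^ σ) (σ * (1 + t) ^ (σ - 1)) t := by
  simpa using ((hasDerivAt_id t).const_add 1).rpow_const (p := σ) (Or.inl ht.ne')

theorem norm_one_add_cpow_sub_le (ν : ℂ) (hν : ν.re * (ν.re - 1) ≠ 0) {δ : ℝ} (hδ : -1 < δ) :
    ‖((1 + δ : ℝ) : ℂ) ^ ν - 1 - ν * δ‖ ≤
      ‖ν * (ν - 1)‖ / (ν.re * (ν.re - 1)) * ((1 + δ) ^ ν.re - 1 - ν.re * δ) := by
  set σ := ν.re
  set K := ‖ν * (ν - 1)‖ / (σ * (σ - 1))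
  have hpos : ∀ x ∈ uIcc 0 δ, 0 < 1 + x := fun x hx => by
    rcases mem_uIcc.1 hx with h | h <;> linarith [h.1]
  refine norm_le_of_norm_deriv2_le_deriv2_of_eq_zero
    (f := fun t => ((1 + t : ℝ) : ℂ) ^ ν - 1 - ν * t)
    (g := fun t => K * ((1 + t) ^ σ - 1 - σ * t))
    (f' := fun t => ν * ((1 + t : ℝ) : ℂ) ^ (ν - 1) - ν)
    (f'' := fun t => ν * (ν - 1) * ((1 + t : ℝ) : ℂ) ^ (ν - 2))
    (g' := fun t => K * (σ * (1 + t) ^ (σ - 1) - σ))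
    (g'' := fun t => K * (σ * (σ - 1) * (1 + t) ^ (σ - 2)))
    (fun x hx => ?_) (fun x hx => ?_) (fun x hx => ?_) (fun x hx => ?_)
    (by simp) (by simp) (by simp) (by simp) (fun x hx => ?_)
  · exact (((hasDerivAt_one_add_ofReal_cpow ν (hpos x hx)).sub_const 1).sub
      ((hasDerivAt_id x).ofReal_comp.const_mul ν)).congr_deriv (by simp)
  · exact (((hasDerivAt_one_add_ofReal_cpow (ν - 1) (hpos x hx)).const_mul ν).sub_const
      ν).congr_deriv (by ring_nf)
  · exact ((((hasDerivAt_one_add_rpow σ (hpos x hx)).sub_const 1).sub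
      ((hasDerivAt_id x).const_mul σ)).const_mul K).congr_deriv (by simp)
  · exact ((((hasDerivAt_one_add_rpow (σ - 1) (hpos x hx)).const_mul σ).sub_const
      σ).const_mul K).congr_deriv (by ring_nf)
  · apply le_of_eq
    rw [norm_mul, Complex.norm_cpow_eq_rpow_re_of_pos (hpos x hx)]
    simp only [Complex.sub_re, Complex.re_ofNat]
    rw [← mul_assoc, div_mul_cancel₀ _ hν]

theorem norm_one_add_cpow_sub_div_le {ρ : ℂ} (hρ : ρ.re = 1 / 2) {δ : ℝ} (hδ : -1 < δ) :
    ‖(((1 + δ : ℝ) : ℂ) ^ (ρ + 1) - 1 - (ρ + 1) * δ) / (ρ * (ρ + 1) * (δ : ℂ) ^ 2)‖ ≤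
      4 / 3 * ((1 + δ) ^ ((3 : ℝ) / 2) - 1 - 3 / 2 * δ) / δ ^ 2 := by
  have hσ : (ρ + 1).re = 3 / 2 := by rw [Complex.add_re, hρ, Complex.one_re]; norm_num
  have hK : 0 < ‖ρ * (ρ + 1)‖ := norm_pos_iff.2 <|
    mul_ne_zero (fun h0 => by norm_num [h0] at hρ) (fun h0 => by norm_num [h0] at hσ)
  have hf := norm_one_add_cpow_sub_le (ρ + 1) (by rw [hσ]; norm_num) hδ
  rw [hσ, add_sub_cancel_right, mul_comm (ρ + 1) ρ] at hf
  rw [norm_div, norm_mul, norm_pow, Complex.norm_real, Real.norm_eq_abs, sq_abs]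
  calc _ ≤ _ / (‖ρ * (ρ + 1)‖ * δ ^ 2) := div_le_div_of_nonneg_right hf (by positivity)
    _ = ‖ρ * (ρ + 1)‖ * (4 / 3 * ((1 + δ) ^ ((3 : ℝ) / 2) - 1 - 3 / 2 * δ)) /
        (‖ρ * (ρ + 1)‖ * δ ^ 2) := by ring
    _ = _ := mul_div_mul_left _ _ hK.ne'

theorem one_add_rpow_three_halves_eq_sqrt_pow {δ : ℝ} (hδ : -1 ≤ δ) :
    (1 + δ) ^ ((3 : ℝ) / 2) = √(1 + δ) ^ 3 := by
  rw [Real.rpow_div_two_eq_sqrt _ (by linarith)]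
  norm_cast

theorem one_add_rpow_three_halves_sub_le_of_nonneg {δ : ℝ} (hδ : 0 ≤ δ) :
    (1 + δ) ^ ((3 : ℝ) / 2) - 1 - 3 / 2 * δ ≤ 3 / 8 * δ ^ 2 := by
  rw [one_add_rpow_three_halves_eq_sqrt_pow (by linarith)]
  set s := √(1 + δ)
  have hs1 : 1 ≤ s := Real.one_le_sqrt.2 (by linarith)
  have hs : s ^ 2 = 1 + δ := Real.sq_sqrt (by linarith)
  clear_value s
  obtain rfl : δ = s ^ 2 - 1 := by linarith
  -- `3δ² - 8(s³ - 1 - 3δ/2) = (s - 1)³(3s + 1)`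
  nlinarith [mul_nonneg (pow_nonneg (sub_nonneg.2 hs1) 3) (by linarith : 0 ≤ 3 * s + 1)]

theorem one_add_rpow_three_halves_sub_le_of_nonpos {δ : ℝ} (h1 : -1 ≤ δ) (h0 : δ ≤ 0) :
    (1 + δ) ^ ((3 : ℝ) / 2) - 1 - 3 / 2 * δ ≤ 3 / 8 * δ ^ 2 - 1 / 8 * δ ^ 3 := by
  rw [one_add_rpow_three_halves_eq_sqrt_pow h1]
  set s := √(1 + δ)
  have hs0 : 0 ≤ s := Real.sqrt_nonneg _
  have hs1 : s ≤ 1 := Real.sqrt_le_one.2 (by linarith)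
  have hs : s ^ 2 = 1 + δ := Real.sq_sqrt (by linarith)
  clear_value s
  obtain rfl : δ = s ^ 2 - 1 := by linarith
  -- `3δ² - δ³ - 8(s³ - 1 - 3δ/2) = s²(1 - s)³(3 + s)`
  nlinarith [mul_nonneg (mul_nonneg (sq_nonneg s) (pow_nonneg (sub_nonneg.2 hs1) 3))
    (by linarith : 0 ≤ 3 + s)]

theorem w_rho_bound_general (γ x h : ℝ) (hx : 1 < x) (hh : |h| < x)
    (ρ : ℂ) (hρ : ρ = 1 / 2 + γ * Complex.I)
    (w : ℂ)
    (hw : w = (((1 + h / x : ℝ) : ℂ) ^ (ρ + 1) - 1 - (ρ + 1) * ((h / x : ℝ) : ℂ)) /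
        (ρ * (ρ + 1) * ((h / x : ℝ) : ℂ) ^ 2)) :
    (0 < h → ‖w‖ ≤ 1 / 2) ∧
    (h < 0 → ‖w‖ ≤ 1 / 2 + |h| / (6 * x)) := by
  have hx0 : 0 < x := by linarith
  set δ := h / x
  have hδ : -1 < δ := by
    rw [lt_div_iff₀ hx0]
    linarith [neg_abs_le h]
  have hw_le : ‖w‖ ≤ 4 / 3 * ((1 + δ) ^ ((3 : ℝ) / 2) - 1 - 3 / 2 * δ) / δ ^ 2 :=
    hw ▸ norm_one_add_cpow_sub_div_le (by simp [hρ]) hδ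
  refine ⟨fun hpos => ?_, fun hneg => ?_⟩
  · have hδ0 : 0 < δ := div_pos hpos hx0
    calc ‖w‖ ≤ _ := hw_le
      _ ≤ 4 / 3 * (3 / 8 * δ ^ 2) / δ ^ 2 := by
        gcongr 4 / 3 * ?_ / _; exact one_add_rpow_three_halves_sub_le_of_nonneg hδ0.le
      _ = 1 / 2 := by field_simp; norm_num
  · have hδ0 : δ < 0 := div_neg_of_neg_of_pos hneg hx0
    calc ‖w‖ ≤ _ := hw_le
      _ ≤ 4 / 3 * (3 / 8 * δ ^ 2 - 1 / 8 * δ ^ 3) / δ ^ 2 := by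
        gcongr 4 / 3 * ?_ / _; exact one_add_rpow_three_halves_sub_le_of_nonpos hδ.le hδ0.le
      _ = 1 / 2 - δ / 6 := by field_simp [hδ0.ne]; ring
      _ = 1 / 2 + |h| / (6 * x) := by rw [abs_of_neg hneg]; ring

/-- For `ρ = 1/2 + iγ` on the critical line, `x > 1`, `0 < |h| < x`, the quantity
`w_ρ = ((1 + h/x)^{ρ+1} − 1 − (ρ+1)h/x)/(ρ(ρ+1)(h/x)²)` satisfies `|w_ρ| ≤ 1/2` if
`h > 0`, and `|w_ρ| ≤ 1/2 + |h|/(6x)` if `−x < h < 0`. -/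
theorem w_rho_bound (γ x h : ℝ) (hx : 1 < x) (hh : |h| < x) (hh0 : h ≠ 0)
    (ρ : ℂ) (hρ : ρ = 1 / 2 + γ * Complex.I)
    (w : ℂ)
    (hw : w = (((1 + h / x : ℝ) : ℂ) ^ (ρ + 1) - 1 - (ρ + 1) * ((h / x : ℝ) : ℂ)) /
        (ρ * (ρ + 1) * ((h / x : ℝ) : ℂ) ^ 2)) :
    (0 < h → ‖w‖ ≤ 1 / 2) ∧
    (h < 0 → ‖w‖ ≤ 1 / 2 + |h| / (6 * x)) :=
  w_rho_bound_general γ x h hx hh ρ hρ w hw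
end
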